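/- The Hessian quadratic form of G at its critical point 0 satisfies: D²G(0)[w,w] > 0 for every nonzero w ∈ ℝ^n with w_i = 0 for all i ≥ k+2, and D²G(0)[w,w] < 0 for every nonzero w ∈ ℝ^n with w_i = 0 for all i ≤ k+1. In particular, 0 is a nondegenerate critical point of G of Morse index n − k − 1. -/

import Mathlib

open Finset

namespace ReebChordAction

/-- `q_1² + ⋯ + q_{k+1}²` (0-indexed: coordinates `0,…,k`). -/
noncomputable def sqA (n k : ℕ) (q : Fin n → ℝ) : ℝ :=
  ∑ i ∈ Finset.univ.filter (fun i : Fin n => (i : ℕ) < k + 1), q i ^ 2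

/-- `q_{k+2}² + ⋯ + q_n²` (0-indexed: coordinates `k+1,…,n-1`). -/
noncomputable def sqB (n k : ℕ) (q : Fin n → ℝ) : ℝ :=
  ∑ i ∈ Finset.univ.filter (fun i : Fin n => k + 1 ≤ (i : ℕ)), q i ^ 2

/-- `u(q) = (q_1²+⋯+q_{k+1}²) − (q_{k+2}²+⋯+q_n²) + ρ(q_1²+⋯+q_{k+1}²)·(η+ε/2) − η`. -/
noncomputable def uFun (n k : ℕ) (η ε : ℝ) (ρ : ℝ → ℝ) (q : Fin n → ℝ) : ℝ :=
  sqA n k q - sqB n k q + ρ (sqA n k q) * (η + ε / 2) - η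

/-- `G(q) = 2·u(q)^{3/2}` (the difference of the two sheets of the front). -/
noncomputable def G (n k : ℕ) (η ε : ℝ) (ρ : ℝ → ℝ) (q : Fin n → ℝ) : ℝ :=
  2 * uFun n k η ε ρ q ^ ((3 : ℝ) / 2)

noncomputable def DA (n k : ℕ) (y : Fin n → ℝ) : (Fin n → ℝ) →L[ℝ] ℝ :=
  ∑ i ∈ Finset.univ.filter (fun i : Fin n => (i : ℕ) < k + 1),
    (2 * y i) • ContinuousLinearMap.proj (R := ℝ) (φ := fun _ : Fin n => ℝ) i

noncomputable def DB (n k : ℕ) (y : Fin n → ℝ) : (Fin n → ℝ) →L[ℝ] ℝ :=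
  ∑ i ∈ Finset.univ.filter (fun i : Fin n => k + 1 ≤ (i : ℕ)),
    (2 * y i) • ContinuousLinearMap.proj (R := ℝ) (φ := fun _ : Fin n => ℝ) i

variable {n k : ℕ} {η ε : ℝ} {ρ : ℝ → ℝ}

lemma DA_apply (y w : Fin n → ℝ) :
    DA n k y w = ∑ i ∈ Finset.univ.filter (fun i : Fin n => (i : ℕ) < k + 1),
      2 * y i * w i := by
  simp [DA, mul_assoc]

lemma DB_apply (y w : Fin n → ℝ) :
    DB n k y w = ∑ i ∈ Finset.univ.filter (fun i : Fin n => k + 1 ≤ (i : ℕ)),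
      2 * y i * w i := by
  simp [DB, mul_assoc]

lemma hasFDerivAt_sqA (y : Fin n → ℝ) : HasFDerivAt (sqA n k) (DA n k y) y := by
  unfold sqA DA
  refine HasFDerivAt.fun_sum fun i _ => ?_
  have h := (hasDerivAt_pow 2 (y i)).comp_hasFDerivAt y
    (ContinuousLinearMap.proj (R := ℝ) (φ := fun _ : Fin n => ℝ) i).hasFDerivAt
  simpa [Function.comp_def] using h

lemma hasFDerivAt_sqB (y : Fin n → ℝ) : HasFDerivAt (sqB n k) (DB n k y) y := by
  unfold sqB DB
  refine HasFDerivAt.fun_sum fun i _ => ?_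
  have h := (hasDerivAt_pow 2 (y i)).comp_hasFDerivAt y
    (ContinuousLinearMap.proj (R := ℝ) (φ := fun _ : Fin n => ℝ) i).hasFDerivAt
  simpa [Function.comp_def] using h

lemma hasFDerivAt_u (hρ : ContDiff ℝ (⊤ : ℕ∞) ρ) (y : Fin n → ℝ) :
    HasFDerivAt (uFun n k η ε ρ)
      ((1 + (η + ε / 2) * deriv ρ (sqA n k y)) • DA n k y - DB n k y) y := by
  have hρd : HasDerivAt ρ (deriv ρ (sqA n k y)) (sqA n k y) :=
    ((hρ.differentiable (by simp)) _).hasDerivAt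
  have h1 := hρd.comp_hasFDerivAt y (hasFDerivAt_sqA (k := k) y)
  have h2 := (((hasFDerivAt_sqA (k := k) y).sub (hasFDerivAt_sqB (k := k) y)).add
    (h1.mul_const (η + ε / 2))).sub_const η
  convert h2 using 1 <;> try rfl
  ext w
  simp only [ContinuousLinearMap.coe_sub', ContinuousLinearMap.coe_smul',
    ContinuousLinearMap.add_apply, ContinuousLinearMap.sub_apply, Pi.sub_apply, Pi.smul_apply,
    ContinuousLinearMap.smul_apply, smul_eq_mul]
  ring

lemma hasFDerivAt_G (hρ : ContDiff ℝ (⊤ : ℕ∞) ρ) (y : Fin n → ℝ) :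
    HasFDerivAt (G n k η ε ρ)
      ((3 * uFun n k η ε ρ y ^ ((1 : ℝ) / 2)) •
        ((1 + (η + ε / 2) * deriv ρ (sqA n k y)) • DA n k y - DB n k y)) y := by
  have h := (Real.hasDerivAt_rpow_const (x := uFun n k η ε ρ y) (p := 3 / 2)
    (Or.inr (by norm_num))).comp_hasFDerivAt y (hasFDerivAt_u hρ y)
  have h2 := h.const_mul 2
  convert h2 using 1 <;> try rfl
  ext w
  simp only [ContinuousLinearMap.smul_apply, smul_eq_mul]
  norm_num
  ring

lemma fderiv_G_apply (hρ : ContDiff ℝ (⊤ : ℕ∞) ρ) (y w : Fin n → ℝ) :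
    fderiv ℝ (G n k η ε ρ) y w =
      3 * uFun n k η ε ρ y ^ ((1 : ℝ) / 2) *
        ((1 + (η + ε / 2) * deriv ρ (sqA n k y)) *
            (∑ i ∈ Finset.univ.filter (fun i : Fin n => (i : ℕ) < k + 1), 2 * y i * w i) -
          ∑ i ∈ Finset.univ.filter (fun i : Fin n => k + 1 ≤ (i : ℕ)), 2 * y i * w i) := by
  rw [(hasFDerivAt_G hρ y).fderiv]
  simp [DA_apply, DB_apply]

lemma contDiff_sqA : ContDiff ℝ (⊤ : ℕ∞) (sqA n k) := by
  unfold sqA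
  exact ContDiff.sum fun i _ =>
    ((ContinuousLinearMap.proj (R := ℝ) (φ := fun _ : Fin n => ℝ) i).contDiff).pow 2

lemma contDiff_sqB : ContDiff ℝ (⊤ : ℕ∞) (sqB n k) := by
  unfold sqB
  exact ContDiff.sum fun i _ =>
    ((ContinuousLinearMap.proj (R := ℝ) (φ := fun _ : Fin n => ℝ) i).contDiff).pow 2

lemma contDiff_u (hρ : ContDiff ℝ (⊤ : ℕ∞) ρ) : ContDiff ℝ (⊤ : ℕ∞) (uFun n k η ε ρ) := by
  unfold uFun
  exact ((contDiff_sqA.sub contDiff_sqB).add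
    ((hρ.comp contDiff_sqA).mul contDiff_const)).sub contDiff_const

lemma sqA_zero : sqA n k (0 : Fin n → ℝ) = 0 := by simp [sqA]

lemma sqB_zero : sqB n k (0 : Fin n → ℝ) = 0 := by simp [sqB]

lemma u_zero (hρ0 : ρ 0 = 1) : uFun n k η ε ρ (0 : Fin n → ℝ) = ε / 2 := by
  simp [uFun, sqA_zero, sqB_zero, hρ0]

set_option maxHeartbeats 1000000 in
/-- The Hessian of `G` at its critical point `0` is positive on nonzero vectors supported in
the first `k+1` coordinates and negative on nonzero vectors supported in the last `n−k−1`
coordinates; in particular `0` is a nondegenerate critical point of Morse index `n−k−1`. -/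
theorem hessian_of_G_at_critical_point
    (n k : ℕ) (hn : 1 ≤ n) (hk : k + 1 ≤ n)
    (η ε : ℝ) (hη : 0 < η) (hε : 0 < ε) (ρ : ℝ → ℝ)
    (hρ_smooth : ContDiff ℝ (⊤ : ℕ∞) ρ)
    (hρ_bd : ∀ u, 0 ≤ ρ u ∧ ρ u ≤ 1)
    (hρ_anti : AntitoneOn ρ (Set.Ici 0))
    (hρ_zero : ρ 0 = 1)
    (hρ_vanish : ∀ u, η + 2 / 3 * ε ≤ u → ρ u = 0)
    (hρ_conv : ∀ x : ℝ, 0 < iteratedDeriv 2 (fun y => y ^ 2 + ρ (y ^ 2) * (η + ε / 2)) x) :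
    fderiv ℝ (G n k η ε ρ) 0 = 0 ∧
    (∀ w : Fin n → ℝ, w ≠ 0 → (∀ i : Fin n, k + 1 ≤ (i : ℕ) → w i = 0) →
      0 < iteratedFDeriv ℝ 2 (G n k η ε ρ) 0 ![w, w]) ∧
    (∀ w : Fin n → ℝ, w ≠ 0 → (∀ i : Fin n, (i : ℕ) < k + 1 → w i = 0) →
      iteratedFDeriv ℝ 2 (G n k η ε ρ) 0 ![w, w] < 0) ∧
    (∀ w : Fin n → ℝ,
      (∀ w' : Fin n → ℝ, iteratedFDeriv ℝ 2 (G n k η ε ρ) 0 ![w, w'] = 0) → w = 0) := by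
  have hu0 : uFun n k η ε ρ (0 : Fin n → ℝ) = ε / 2 := u_zero hρ_zero
  have hune : uFun n k η ε ρ (0 : Fin n → ℝ) ≠ 0 := by rw [hu0]; positivity
  -- differentiability of deriv ρ
  have hrhoInf : ContDiff ℝ ((⊤ : ℕ∞) : WithTop ℕ∞) ρ := hρ_smooth.of_le (by simp)
  have hdρ : Differentiable ℝ (deriv ρ) := by
    simpa using (hrhoInf.iterate_deriv 1).differentiable (by simp)
  -- C² regularity of G at 0 and differentiability of fderiv G at 0
  have hGc : ContDiffAt ℝ 2 (G n k η ε ρ) 0 := by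
    have hu2 : ContDiffAt ℝ 2 (uFun n k η ε ρ) 0 :=
      ((contDiff_u hρ_smooth).contDiffAt).of_le (WithTop.coe_le_coe.mpr le_top)
    have h2 : ContDiffAt ℝ 2 (fun q => 2 * uFun n k η ε ρ q ^ ((3 : ℝ) / 2)) 0 :=
      (contDiffAt_const (c := (2 : ℝ))).mul (hu2.rpow_const_of_ne hune)
    exact h2
  have hd1' : DifferentiableAt ℝ (fderiv ℝ (G n k η ε ρ)) 0 :=
    (hGc.fderiv_right (m := 1) (by norm_num)).differentiableAt (by simp)
  -- positivity of c := 1 + (η+ε/2) * deriv ρ 0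
  have hc : 0 < 1 + (η + ε / 2) * deriv ρ 0 := by
    have hFd : deriv (fun y : ℝ => y ^ 2 + ρ (y ^ 2) * (η + ε / 2)) =
        fun y : ℝ => y * (2 + 2 * (η + ε / 2) * deriv ρ (y ^ 2)) := by
      funext y
      have hp : HasDerivAt (fun y : ℝ => y ^ 2) (2 * y) y := by
        simpa using hasDerivAt_pow 2 y
      have hρ' : HasDerivAt ρ (deriv ρ (y ^ 2)) (y ^ 2) :=
        (hρ_smooth.differentiable (by simp) _).hasDerivAt
      have hcomp : HasDerivAt (fun z : ℝ => ρ (z ^ 2)) (deriv ρ (y ^ 2) * (2 * y)) y :=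
        HasDerivAt.comp (h := fun z : ℝ => z ^ 2) y hρ' hp
      have h1 : HasDerivAt (fun y : ℝ => y ^ 2 + ρ (y ^ 2) * (η + ε / 2))
          (y * (2 + 2 * (η + ε / 2) * deriv ρ (y ^ 2))) y := by
        have h := hp.add (hcomp.mul_const (η + ε / 2))
        convert h using 1 <;> try rfl
        ring
      exact h1.deriv
    have hg2 : DifferentiableAt ℝ (fun y : ℝ => 2 + 2 * (η + ε / 2) * deriv ρ (y ^ 2)) 0 := by
      have : DifferentiableAt ℝ (fun y : ℝ => deriv ρ (y ^ 2)) 0 :=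
        (hdρ _).comp 0 (differentiableAt_pow 2)
      exact (differentiableAt_const _).add ((differentiableAt_const _).mul this)
    have h2 : deriv (deriv (fun y : ℝ => y ^ 2 + ρ (y ^ 2) * (η + ε / 2))) 0 =
        2 + 2 * (η + ε / 2) * deriv ρ 0 := by
      rw [hFd]
      have h := (hasDerivAt_id' (x := (0 : ℝ))).fun_mul hg2.hasDerivAt
      rw [h.deriv]
      norm_num
    have hconv := hρ_conv 0
    rw [show (2 : ℕ) = 1 + 1 from rfl, iteratedDeriv_succ, iteratedDeriv_one, h2] at hconv
    linarith
  -- the Hessian formula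
  have key : ∀ v w : Fin n → ℝ, iteratedFDeriv ℝ 2 (G n k η ε ρ) 0 ![v, w] =
      3 * (ε / 2) ^ ((1 : ℝ) / 2) *
        ((1 + (η + ε / 2) * deriv ρ 0) *
            (∑ i ∈ Finset.univ.filter (fun i : Fin n => (i : ℕ) < k + 1), 2 * v i * w i) -
          ∑ i ∈ Finset.univ.filter (fun i : Fin n => k + 1 ≤ (i : ℕ)), 2 * v i * w i) := by
    intro v w
    rw [iteratedFDeriv_two_apply]
    simp only [Matrix.cons_val_zero, Matrix.cons_val_one, Matrix.head_cons]
    have h1 : fderiv ℝ (fun y => fderiv ℝ (G n k η ε ρ) y w) 0 =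
        (fderiv ℝ (fderiv ℝ (G n k η ε ρ)) 0).flip w := by
      rw [fderiv_clm_apply hd1' (differentiableAt_const w)]
      simp
    have h2 : fderiv ℝ (fderiv ℝ (G n k η ε ρ)) 0 v w =
        fderiv ℝ (fun y => fderiv ℝ (G n k η ε ρ) y w) 0 v := by
      rw [h1]; rfl
    rw [h2]
    have hφ : DifferentiableAt ℝ (fun y => fderiv ℝ (G n k η ε ρ) y w) 0 :=
      hd1'.clm_apply (differentiableAt_const w)
    have hsm : HasDerivAt (fun t : ℝ => t • v) v 0 := by
      simpa using (hasDerivAt_id (0 : ℝ)).smul_const v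
    have h0v : (0 : ℝ) • v = 0 := zero_smul _ _
    have hline : HasDerivAt ((fun y => fderiv ℝ (G n k η ε ρ) y w) ∘ (fun t : ℝ => t • v))
        (fderiv ℝ (fun y => fderiv ℝ (G n k η ε ρ) y w) 0 v) 0 :=
      HasFDerivAt.comp_hasDerivAt 0 (by rw [h0v]; exact hφ.hasFDerivAt) hsm
    have heq : ((fun y => fderiv ℝ (G n k η ε ρ) y w) ∘ (fun t : ℝ => t • v)) =
        fun t : ℝ => t * (3 * uFun n k η ε ρ (t • v) ^ ((1 : ℝ) / 2) *
          ((1 + (η + ε / 2) * deriv ρ (sqA n k (t • v))) *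
              (∑ i ∈ Finset.univ.filter (fun i : Fin n => (i : ℕ) < k + 1), 2 * v i * w i) -
            ∑ i ∈ Finset.univ.filter (fun i : Fin n => k + 1 ≤ (i : ℕ)), 2 * v i * w i)) := by
      funext t
      simp only [Function.comp_apply]
      rw [fderiv_G_apply hρ_smooth]
      have hA : ∑ i ∈ Finset.univ.filter (fun i : Fin n => (i : ℕ) < k + 1),
          2 * (t • v) i * w i =
          t * ∑ i ∈ Finset.univ.filter (fun i : Fin n => (i : ℕ) < k + 1), 2 * v i * w i := by
        rw [Finset.mul_sum]
        exact Finset.sum_congr rfl fun i _ => by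
          simp only [Pi.smul_apply, smul_eq_mul]; ring
      have hB : ∑ i ∈ Finset.univ.filter (fun i : Fin n => k + 1 ≤ (i : ℕ)),
          2 * (t • v) i * w i =
          t * ∑ i ∈ Finset.univ.filter (fun i : Fin n => k + 1 ≤ (i : ℕ)), 2 * v i * w i := by
        rw [Finset.mul_sum]
        exact Finset.sum_congr rfl fun i _ => by
          simp only [Pi.smul_apply, smul_eq_mul]; ring
      rw [hA, hB]
      ring
    have hsmv : DifferentiableAt ℝ (fun t : ℝ => t • v) 0 := hsm.differentiableAt
    have huc : DifferentiableAt ℝ (fun t : ℝ => uFun n k η ε ρ (t • v)) 0 := by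
      have := DifferentiableAt.comp 0
        (((contDiff_u (n := n) (k := k) (η := η) (ε := ε) hρ_smooth).differentiable (by simp)) ((0 : ℝ) • v)) hsmv
      simpa [Function.comp_def] using this
    have hsc : DifferentiableAt ℝ (fun t : ℝ => sqA n k (t • v)) 0 := by
      have := DifferentiableAt.comp 0
        ((contDiff_sqA (n := n) (k := k)).differentiable (by simp) ((0 : ℝ) • v)) hsmv
      simpa [Function.comp_def] using this
    have hg : DifferentiableAt ℝ (fun t : ℝ =>
        3 * uFun n k η ε ρ (t • v) ^ ((1 : ℝ) / 2) *
          ((1 + (η + ε / 2) * deriv ρ (sqA n k (t • v))) *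
              (∑ i ∈ Finset.univ.filter (fun i : Fin n => (i : ℕ) < k + 1), 2 * v i * w i) -
            ∑ i ∈ Finset.univ.filter (fun i : Fin n => k + 1 ≤ (i : ℕ)), 2 * v i * w i)) 0 := by
      have h1 : DifferentiableAt ℝ (fun t : ℝ => uFun n k η ε ρ (t • v) ^ ((1 : ℝ) / 2)) 0 :=
        huc.rpow_const (Or.inl (by rw [h0v, hu0]; positivity))
      have h2 : DifferentiableAt ℝ (fun t : ℝ => deriv ρ (sqA n k (t • v))) 0 := by
        have := DifferentiableAt.comp 0 (hdρ (sqA n k ((0 : ℝ) • v))) hsc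
        simpa [Function.comp_def] using this
      exact ((differentiableAt_const _).mul h1).mul
        ((((differentiableAt_const _).add ((differentiableAt_const _).mul h2)).mul
          (differentiableAt_const _)).sub (differentiableAt_const _))
    have hd := (hasDerivAt_id' (x := (0 : ℝ))).fun_mul hg.hasDerivAt
    have huniq := hline.unique (heq.symm ▸ hd)
    rw [huniq]
    simp only [id_eq, h0v, hu0, sqA_zero]
    ring
  -- now the four claims
  refine ⟨?_, ?_, ?_, ?_⟩
  · ext w
    rw [fderiv_G_apply hρ_smooth]
    simp
  · intro w hw hsupp
    rw [key w w]
    have hSB : ∑ i ∈ Finset.univ.filter (fun i : Fin n => k + 1 ≤ (i : ℕ)),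
        2 * w i * w i = 0 :=
      Finset.sum_eq_zero fun i hi => by
        rw [hsupp i (by simpa using (Finset.mem_filter.mp hi).2)]; ring
    have hSA : 0 < ∑ i ∈ Finset.univ.filter (fun i : Fin n => (i : ℕ) < k + 1),
        2 * w i * w i := by
      obtain ⟨j, hj⟩ := Function.ne_iff.mp hw
      have hjA : (j : ℕ) < k + 1 := by
        by_contra h
        exact hj (hsupp j (le_of_not_gt h))
      refine Finset.sum_pos' (fun i _ => by nlinarith [mul_self_nonneg (w i)])
        ⟨j, Finset.mem_filter.mpr ⟨Finset.mem_univ _, hjA⟩, ?_⟩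
      have := mul_self_pos.mpr hj
      nlinarith
    rw [hSB, sub_zero]
    have h3 : (0 : ℝ) < 3 * (ε / 2) ^ ((1 : ℝ) / 2) := by positivity
    exact mul_pos h3 (mul_pos hc hSA)
  · intro w hw hsupp
    rw [key w w]
    have hSA : ∑ i ∈ Finset.univ.filter (fun i : Fin n => (i : ℕ) < k + 1),
        2 * w i * w i = 0 :=
      Finset.sum_eq_zero fun i hi => by
        rw [hsupp i (by simpa using (Finset.mem_filter.mp hi).2)]; ring
    have hSB : 0 < ∑ i ∈ Finset.univ.filter (fun i : Fin n => k + 1 ≤ (i : ℕ)),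
        2 * w i * w i := by
      obtain ⟨j, hj⟩ := Function.ne_iff.mp hw
      have hjB : k + 1 ≤ (j : ℕ) := by
        by_contra h
        exact hj (hsupp j (lt_of_not_ge h))
      refine Finset.sum_pos' (fun i _ => by nlinarith [mul_self_nonneg (w i)])
        ⟨j, Finset.mem_filter.mpr ⟨Finset.mem_univ _, hjB⟩, ?_⟩
      have := mul_self_pos.mpr hj
      nlinarith
    rw [hSA, mul_zero, zero_sub]
    have h3 : (0 : ℝ) < 3 * (ε / 2) ^ ((1 : ℝ) / 2) := by positivity
    exact mul_neg_of_pos_of_neg h3 (by linarith)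
  · intro w hw
    set w' : Fin n → ℝ := fun j => if (j : ℕ) < k + 1 then w j else -w j with hw'def
    have h := hw w'
    rw [key w w'] at h
    have hA : ∑ i ∈ Finset.univ.filter (fun i : Fin n => (i : ℕ) < k + 1),
        2 * w i * w' i =
        ∑ i ∈ Finset.univ.filter (fun i : Fin n => (i : ℕ) < k + 1), 2 * w i * w i :=
      Finset.sum_congr rfl fun i hi => by
        have hi' : (i : ℕ) < k + 1 := by simpa using (Finset.mem_filter.mp hi).2
        simp only [hw'def, hi', if_true]
    have hB : ∑ i ∈ Finset.univ.filter (fun i : Fin n => k + 1 ≤ (i : ℕ)),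
        2 * w i * w' i =
        -∑ i ∈ Finset.univ.filter (fun i : Fin n => k + 1 ≤ (i : ℕ)), 2 * w i * w i := by
      rw [← Finset.sum_neg_distrib]
      refine Finset.sum_congr rfl fun i hi => ?_
      have hi' : ¬((i : ℕ) < k + 1) := by
        have := (Finset.mem_filter.mp hi).2
        omega
      simp only [hw'def, hi', if_false]
      ring
    rw [hA, hB] at h
    have h3 : (0 : ℝ) < 3 * (ε / 2) ^ ((1 : ℝ) / 2) := by positivity
    have hz : (1 + (η + ε / 2) * deriv ρ 0) *
        (∑ i ∈ Finset.univ.filter (fun i : Fin n => (i : ℕ) < k + 1), 2 * w i * w i) +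
        (∑ i ∈ Finset.univ.filter (fun i : Fin n => k + 1 ≤ (i : ℕ)), 2 * w i * w i) = 0 := by
      have := (mul_eq_zero.mp h).resolve_left (ne_of_gt h3)
      linarith
    have hPA : 0 ≤ ∑ i ∈ Finset.univ.filter (fun i : Fin n => (i : ℕ) < k + 1),
        2 * w i * w i :=
      Finset.sum_nonneg fun i _ => by nlinarith [mul_self_nonneg (w i)]
    have hPB : 0 ≤ ∑ i ∈ Finset.univ.filter (fun i : Fin n => k + 1 ≤ (i : ℕ)),
        2 * w i * w i :=
      Finset.sum_nonneg fun i _ => by nlinarith [mul_self_nonneg (w i)]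
    have hPA0 : ∑ i ∈ Finset.univ.filter (fun i : Fin n => (i : ℕ) < k + 1),
        2 * w i * w i = 0 := by nlinarith
    have hPB0 : ∑ i ∈ Finset.univ.filter (fun i : Fin n => k + 1 ≤ (i : ℕ)),
        2 * w i * w i = 0 := by nlinarith
    funext i
    have hAz : ∀ i ∈ Finset.univ.filter (fun i : Fin n => (i : ℕ) < k + 1),
        2 * w i * w i = 0 :=
      (Finset.sum_eq_zero_iff_of_nonneg
        (fun i _ => by nlinarith [mul_self_nonneg (w i)])).mp hPA0
    have hBz : ∀ i ∈ Finset.univ.filter (fun i : Fin n => k + 1 ≤ (i : ℕ)),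
        2 * w i * w i = 0 :=
      (Finset.sum_eq_zero_iff_of_nonneg
        (fun i _ => by nlinarith [mul_self_nonneg (w i)])).mp hPB0
    show w i = 0
    rcases lt_or_ge ((i : ℕ)) (k + 1) with hcase | hcase
    · have := hAz i (Finset.mem_filter.mpr ⟨Finset.mem_univ _, hcase⟩)
      nlinarith [mul_self_nonneg (w i)]
    · have := hBz i (Finset.mem_filter.mpr ⟨Finset.mem_univ _, hcase⟩)
      nlinarith [mul_self_nonneg (w i)]

end ReebChordAction
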